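/- arXiv:2512.20478 — 5 statements merged into one kernel-verified Lean document; each statement's English description precedes it below -/
import Mathlib

section
/- If (t_k) is defined by t_0 ≥ 1 and t_{k+1} = (m + sqrt(m^2 + 4 t_k^2))/2 with m ∈ (0,1], then for every k ≥ 0 one has mk/2 + t_0 ≤ t_k ≤ mk + t_0. -/
/-! Each step of the recursion adds between `m / 2` and `m`, because
`2 t ≤ √(m² + 4 t²) ≤ m + 2 t` for `m, t ≥ 0`; the lower increment keeps `t_k ≥ t_0 ≥ 0`, so the
upper one applies at every step. Summing the increments over `k` steps gives the bounds. -/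

section IncrementBounds

variable {u : ℕ → ℝ}

theorem mul_add_le_of_le_sub_succ {a : ℝ} (h : ∀ k, a ≤ u (k + 1) - u k) (k : ℕ) :
    a * k + u 0 ≤ u k := by
  induction k with
  | zero => simp
  | succ k ih => push_cast; linarith [h k]

theorem le_mul_add_of_sub_succ_le {b : ℝ} (h : ∀ k, u (k + 1) - u k ≤ b) (k : ℕ) :
    u k ≤ b * k + u 0 := by
  induction k with
  | zero => simp
  | succ k ih => push_cast; linarith [h k]

end IncrementBounds

theorem two_mul_le_sqrt_sq_add_four_mul_sq (m t : ℝ) : 2 * t ≤ √(m ^ 2 + 4 * t ^ 2) :=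
  Real.le_sqrt_of_sq_le (by nlinarith [sq_nonneg m])

theorem sqrt_sq_add_four_mul_sq_le {m t : ℝ} (hm : 0 ≤ m) (ht : 0 ≤ t) :
    √(m ^ 2 + 4 * t ^ 2) ≤ m + 2 * t :=
  Real.sqrt_le_iff.2 ⟨by positivity, by nlinarith [mul_nonneg hm ht]⟩

theorem t_growth_bounds_general (m : ℝ) (t : ℕ → ℝ)
    (hm : 0 < m) (ht0 : 1 ≤ t 0)
    (hrec : ∀ k, t (k + 1) = (m + Real.sqrt (m ^ 2 + 4 * (t k) ^ 2)) / 2) :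
    ∀ k : ℕ, m * k / 2 + t 0 ≤ t k ∧ t k ≤ m * k + t 0 := by
  have step_lower : ∀ k, m / 2 ≤ t (k + 1) - t k := fun k => by
    rw [hrec k]; linarith [two_mul_le_sqrt_sq_add_four_mul_sq m (t k)]
  have lower : ∀ k : ℕ, m * k / 2 + t 0 ≤ t k := fun k => by
    linarith [mul_add_le_of_le_sub_succ step_lower k]
  have t_nonneg : ∀ k, 0 ≤ t k := fun k => by
    linarith [lower k, show 0 ≤ m * k / 2 by positivity]
  have step_upper : ∀ k, t (k + 1) - t k ≤ m := fun k => by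
    rw [hrec k]; linarith [sqrt_sq_add_four_mul_sq_le hm.le (t_nonneg k)]
  exact fun k => ⟨lower k, le_mul_add_of_sub_succ_le step_upper k⟩

theorem t_growth_bounds (m : ℝ) (t : ℕ → ℝ)
    (hm : 0 < m) (hm1 : m ≤ 1) (ht0 : 1 ≤ t 0)
    (hrec : ∀ k, t (k + 1) = (m + Real.sqrt (m ^ 2 + 4 * (t k) ^ 2)) / 2) :
    ∀ k : ℕ, m * k / 2 + t 0 ≤ t k ∧ t k ≤ m * k + t 0 :=
  t_growth_bounds_general m t hm ht0 hrec
end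

section
/- Let m ∈ (0,1) and let (t_k) satisfy t_{k+1} ≥ m(k+1)/2 + 1 for all k. If a positive sequence (s_k) satisfies s_{k+1} ≤ (1 + (1-m)/(t_{k+1}-1)) s_k for all k ≥ 0, then for every K ≥ 1, s_K ≤ s_0 · e^{2(1-m)/m} · K^{2(1-m)/m}. -/
/-!
Since `(1 - m) / (t (k+1) - 1) ≤ c / (k+1)` with `c = 2(1-m)/m` and `1 + x ≤ eˣ`, the recursion
gives `s K ≤ s 0 · exp (c · H_K)`, and the harmonic number satisfies `H_K ≤ 1 + log K`.
-/

open Finset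

theorem le_mul_exp_sum_of_le_one_add_mul {s a : ℕ → ℝ} (hs : ∀ k, 0 ≤ s k)
    (hrec : ∀ k, s (k + 1) ≤ (1 + a k) * s k) (K : ℕ) :
    s K ≤ s 0 * Real.exp (∑ k ∈ range K, a k) := by
  induction K with
  | zero => simp
  | succ n ih =>
    calc s (n + 1) ≤ (1 + a n) * s n := hrec n
      _ ≤ Real.exp (a n) * s n := by
          gcongr
          · exact hs n
          · linarith [Real.add_one_le_exp (a n)]
      _ ≤ Real.exp (a n) * (s 0 * Real.exp (∑ k ∈ range n, a k)) := by gcongr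
      _ = s 0 * Real.exp (∑ k ∈ range (n + 1), a k) := by
          rw [sum_range_succ, Real.exp_add]; ring

theorem le_mul_exp_mul_rpow_of_le_one_add_div {s : ℕ → ℝ} {c : ℝ} (hc : 0 ≤ c)
    (hs : ∀ k, 0 ≤ s k) (hrec : ∀ k, s (k + 1) ≤ (1 + c / (k + 1)) * s k)
    {K : ℕ} (hK : 1 ≤ K) :
    s K ≤ s 0 * Real.exp c * (K : ℝ) ^ c := by
  have hKpos : (0 : ℝ) < K := by exact_mod_cast hK
  have hsum : ∑ k ∈ range K, c / ((k : ℝ) + 1) = c * harmonic K := by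
    simp [harmonic, mul_sum, div_eq_mul_inv]
  calc s K ≤ s 0 * Real.exp (c * harmonic K) := hsum ▸ le_mul_exp_sum_of_le_one_add_mul hs hrec K
    _ ≤ s 0 * Real.exp (c * (1 + Real.log K)) := by
        gcongr
        · exact hs 0
        · exact harmonic_le_one_add_log K
    _ = s 0 * Real.exp c * (K : ℝ) ^ c := by
        rw [Real.rpow_def_of_pos hKpos, mul_assoc, ← Real.exp_add]; ring_nf

theorem s_k_upper_bound (m : ℝ) (t s : ℕ → ℝ)
    (hm : 0 < m) (hm1 : m < 1)
    (ht : ∀ k : ℕ, m * (k + 1) / 2 + 1 ≤ t (k + 1))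
    (hspos : ∀ k, 0 < s k)
    (hsrec : ∀ k, s (k + 1) ≤ (1 + (1 - m) / (t (k + 1) - 1)) * s k) :
    ∀ K : ℕ, 1 ≤ K →
      s K ≤ s 0 * Real.exp (2 * (1 - m) / m) * (K : ℝ) ^ (2 * (1 - m) / m) := by
  intro K hK
  have hm1' : 0 ≤ 1 - m := by linarith
  refine le_mul_exp_mul_rpow_of_le_one_add_div (by positivity) (fun k => (hspos k).le)
    (fun k => ?_) hK
  have hrate : (1 - m) / (t (k + 1) - 1) ≤ 2 * (1 - m) / m / (k + 1) := by
    calc (1 - m) / (t (k + 1) - 1) ≤ (1 - m) / (m * (k + 1) / 2) := by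
          gcongr
          linarith [ht k]
      _ = 2 * (1 - m) / m / (k + 1) := by field_simp
  calc s (k + 1) ≤ (1 + (1 - m) / (t (k + 1) - 1)) * s k := hsrec k
    _ ≤ (1 + 2 * (1 - m) / m / (k + 1)) * s k := by
        gcongr
        exact (hspos k).le
end

section
/- Let f : H → ℝ be convex and L-smooth, and define for points x, y with ∇f(y) ≠ ∇f(x) the local smoothness estimate L(x,y) = (½‖∇f(y) - ∇f(x)‖²)/(⟨∇f(y), y - x⟩ - (f(y) - f(x))). Then 0 < L(x,y) ≤ L. -/
/-!
Convexity bounds `f` below by its tangent plane at `y`, and the Lipschitz gradient bounds it above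
by a quadratic at `x` (descent lemma). Comparing the two at the gradient step
`u = x - L⁻¹ (∇f x - ∇f y)` gives `‖∇f x - ∇f y‖² / (2L) ≤ D_f(x, y)`, where `D_f` is the Bregman
divergence, i.e. the denominator of the estimate. This rearranges to the upper bound, and since
`∇f x ≠ ∇f y` it also forces the denominator to be positive.
-/

open AffineMap Set

section

variable {H : Type*} [NormedAddCommGroup H] [InnerProductSpace ℝ H] [CompleteSpace H]

theorem HasGradientAt.hasDerivAt_comp_lineMap {f : H → ℝ} {g w z : H} {t : ℝ}
    (h : HasGradientAt f g (lineMap w z t)) :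
    HasDerivAt (f ∘ lineMap w z) (inner ℝ g (z - w)) t := by
  simpa using (hasGradientAt_iff_hasFDerivAt.mp h).comp_hasDerivAt t hasDerivAt_lineMap

theorem ConvexOn.add_inner_le_of_hasGradientAt {s : Set H} {f : H → ℝ} {g w z : H}
    (hf : ConvexOn ℝ s f) (hw : w ∈ s) (hz : z ∈ s) (h : HasGradientAt f g w) :
    f w + inner ℝ g (z - w) ≤ f z := by
  have h₀ : HasGradientAt f g (lineMap w z (0 : ℝ)) := by simpa using h
  have := (hf.comp_affineMap (lineMap w z)).le_slope_of_hasDerivAt (x := 0) (y := 1)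
    (by simpa) (by simpa) zero_lt_one h₀.hasDerivAt_comp_lineMap
  simp only [slope, sub_zero, inv_one, Function.comp_apply, lineMap_apply_one, lineMap_apply_zero,
    vsub_eq_sub, smul_eq_mul, one_mul] at this
  linarith

theorem le_add_inner_add_of_lipschitz_gradient {f : H → ℝ} {f' : H → H} {L : ℝ}
    (hgrad : ∀ x, HasGradientAt f (f' x) x) (hlip : ∀ x y, ‖f' x - f' y‖ ≤ L * ‖x - y‖)
    (w z : H) :
    f z ≤ f w + inner ℝ (f' w) (z - w) + L / 2 * ‖z - w‖ ^ 2 := by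
  set φ : ℝ → ℝ := fun t ↦
    (f ∘ lineMap w z) t - t * inner ℝ (f' w) (z - w) - L / 2 * t ^ 2 * ‖z - w‖ ^ 2
  have hφ : ∀ t, HasDerivAt φ (inner ℝ (f' (lineMap w z t) - f' w) (z - w)
      - L * t * ‖z - w‖ ^ 2) t := by
    intro t
    refine ((((hgrad _).hasDerivAt_comp_lineMap).sub
      ((hasDerivAt_id t).mul_const (inner ℝ (f' w) (z - w)))).sub
      (((hasDerivAt_pow 2 t).const_mul (L / 2)).mul_const (‖z - w‖ ^ 2))).congr_deriv ?_
    rw [inner_sub_left]; ring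
  have hφ' : ∀ t ∈ interior (Ici (0 : ℝ)), inner ℝ (f' (lineMap w z t) - f' w) (z - w)
      - L * t * ‖z - w‖ ^ 2 ≤ 0 := by
    intro t ht
    rw [interior_Ici] at ht
    have hdist : ‖lineMap w z t - w‖ = t * ‖z - w‖ := by
      rw [← vsub_eq_sub, lineMap_vsub_left, norm_smul, Real.norm_of_nonneg ht.out.le, vsub_eq_sub]
    rw [sub_nonpos]
    calc inner ℝ (f' (lineMap w z t) - f' w) (z - w)
        ≤ ‖f' (lineMap w z t) - f' w‖ * ‖z - w‖ := real_inner_le_norm _ _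
      _ ≤ L * ‖lineMap w z t - w‖ * ‖z - w‖ := by gcongr; exact hlip _ _
      _ = L * t * ‖z - w‖ ^ 2 := by rw [hdist]; ring
  have := antitoneOn_of_hasDerivWithinAt_nonpos (convex_Ici 0)
    (fun t _ ↦ (hφ t).continuousAt.continuousWithinAt)
    (fun t _ ↦ (hφ t).hasDerivWithinAt) hφ' (mem_Ici.mpr le_rfl) (zero_le_one' ℝ) zero_le_one
  simp only [φ, Function.comp_apply, lineMap_apply_one, lineMap_apply_zero, one_mul, one_pow,
    mul_one, zero_mul, zero_pow two_ne_zero, mul_zero, sub_zero] at this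
  linarith

def bregmanDiv (f : H → ℝ) (f' : H → H) (x y : H) : ℝ :=
  f x - f y - inner ℝ (f' y) (x - y)

theorem ConvexOn.sq_norm_sub_div_le_bregmanDiv {f : H → ℝ} {f' : H → H} {L : ℝ} (hL : 0 < L)
    (hf : ConvexOn ℝ univ f) (hgrad : ∀ x, HasGradientAt f (f' x) x)
    (hlip : ∀ x y, ‖f' x - f' y‖ ≤ L * ‖x - y‖) (x y : H) :
    ‖f' x - f' y‖ ^ 2 / (2 * L) ≤ bregmanDiv f f' x y := by
  set g := f' x - f' y
  -- minimizer of the quadratic upper bound at `x` for `f - ⟪∇f y, ·⟫`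
  set u := x - L⁻¹ • g
  have hconv := hf.add_inner_le_of_hasGradientAt (mem_univ y) (mem_univ u) (hgrad y)
  have hdesc := le_add_inner_add_of_lipschitz_gradient hgrad hlip x u
  have hux : u - x = -(L⁻¹ • g) := sub_sub_cancel_left _ _
  have huy : u - y = (x - y) - L⁻¹ • g := sub_right_comm _ _ _
  have hg : inner ℝ (f' x) g - inner ℝ (f' y) g = ‖g‖ ^ 2 := by
    rw [← inner_sub_left, real_inner_self_eq_norm_sq]
  rw [huy, inner_sub_right, real_inner_smul_right] at hconv
  rw [hux, inner_neg_right, real_inner_smul_right, norm_neg, norm_smul, mul_pow,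
    Real.norm_of_nonneg (inv_nonneg.mpr hL.le)] at hdesc
  unfold bregmanDiv
  field_simp at hconv hdesc ⊢
  linarith

end

theorem local_smoothness_estimate {H : Type*} [NormedAddCommGroup H]
    [InnerProductSpace ℝ H] [CompleteSpace H]
    (f : H → ℝ) (f' : H → H) (L : ℝ) (hL : 0 < L)
    (hconv : ConvexOn ℝ Set.univ f)
    (hgrad : ∀ x, HasGradientAt f (f' x) x)
    (hlip : ∀ x y, ‖f' x - f' y‖ ≤ L * ‖x - y‖)
    (x y : H) (hxy : f' y ≠ f' x) :
    0 < ((1 / 2) * ‖f' y - f' x‖ ^ 2) /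
          ((inner ℝ (f' y) (y - x) : ℝ) - (f y - f x)) ∧
      ((1 / 2) * ‖f' y - f' x‖ ^ 2) /
          ((inner ℝ (f' y) (y - x) : ℝ) - (f y - f x)) ≤ L := by
  have hD : inner ℝ (f' y) (y - x) - (f y - f x) = bregmanDiv f f' x y := by
    rw [bregmanDiv, ← neg_sub x y, inner_neg_right]; ring
  have hbound := hconv.sq_norm_sub_div_le_bregmanDiv hL hgrad hlip x y
  rw [norm_sub_rev] at hbound
  have hnorm : 0 < ‖f' y - f' x‖ ^ 2 := by
    have := norm_pos_iff.mpr (sub_ne_zero.mpr hxy)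
    positivity
  have hDpos : 0 < bregmanDiv f f' x y := (div_pos hnorm (by positivity)).trans_le hbound
  rw [hD]
  refine ⟨by positivity, ?_⟩
  rw [div_le_iff₀ hDpos]
  rw [div_le_iff₀ (by positivity)] at hbound
  linarith
end

section
/- Let f be convex and L-smooth. If ⟨∇f(y), y - x⟩ - (f(y) - f(x)) = 0 for some points x, y, then ∇f(y) = ∇f(x). -/
/-!
Convexity at `y` and the descent lemma at `x`, both evaluated at the gradient step
`x - L⁻¹ • (∇f(x) - ∇f(y))`, give
`f y + ⟪∇f(y), x - y⟫ + ‖∇f(x) - ∇f(y)‖² / (2L) ≤ f x`.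
The gap `⟪∇f(y), y - x⟫ - (f y - f x)` therefore bounds `‖∇f(x) - ∇f(y)‖² / (2L)` from above.
-/

open Set InnerProductSpace

section

variable {H : Type*} [NormedAddCommGroup H] [InnerProductSpace ℝ H] [CompleteSpace H]
  {f : H → ℝ}

theorem HasGradientAt.hasDerivAt_comp_add_smul {g a v : H} {t : ℝ}
    (hf : HasGradientAt f g (a + t • v)) :
    HasDerivAt (fun s : ℝ => f (a + s • v)) ⟪g, v⟫_ℝ t := by
  have hline : HasDerivAt (fun s : ℝ => a + s • v) v t := by
    simpa using ((hasDerivAt_id t).smul_const v).const_add a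
  simpa [toDual_apply_apply, Function.comp_def] using hf.hasFDerivAt.comp_hasDerivAt t hline

theorem ConvexOn.add_inner_le_of_hasGradientAt_s9 (hconv : ConvexOn ℝ univ f) {g a : H}
    (hf : HasGradientAt f g a) (b : H) :
    f a + ⟪g, b - a⟫_ℝ ≤ f b := by
  have hφ : ConvexOn ℝ univ fun s : ℝ => f (a + s • (b - a)) := by
    simpa [Function.comp_def, AffineMap.lineMap_apply, add_comm]
      using hconv.comp_affineMap (AffineMap.lineMap a b)
  have hderiv := (show HasGradientAt f g (a + (0 : ℝ) • (b - a)) by simpa using hf)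
    |>.hasDerivAt_comp_add_smul
  have := hφ.le_slope_of_hasDerivAt (mem_univ 0) (mem_univ 1) zero_lt_one hderiv
  simp only [slope_def_field, zero_smul, add_zero, one_smul, add_sub_cancel, sub_zero,
    div_one] at this
  linarith

theorem le_add_inner_add_half_mul_sq_of_lipschitz_gradient {f' : H → H} {L : ℝ}
    (hf : ∀ x, HasGradientAt f (f' x) x) (hlip : ∀ x y, ‖f' x - f' y‖ ≤ L * ‖x - y‖)
    (a b : H) :
    f b ≤ f a + ⟪f' a, b - a⟫_ℝ + L / 2 * ‖b - a‖ ^ 2 := by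
  set v := b - a
  have hφ (s : ℝ) : HasDerivAt (fun s : ℝ => f (a + s • v)) ⟪f' (a + s • v), v⟫_ℝ s :=
    (hf _).hasDerivAt_comp_add_smul
  have hB (s : ℝ) : HasDerivAt (fun s : ℝ => f a + s * ⟪f' a, v⟫_ℝ + L / 2 * ‖v‖ ^ 2 * s ^ 2)
      (⟪f' a, v⟫_ℝ + L * ‖v‖ ^ 2 * s) s := by
    refine (((hasDerivAt_mul_const _).const_add (f a)).fun_add
      ((hasDerivAt_pow 2 s).const_mul (L / 2 * ‖v‖ ^ 2))).congr_deriv ?_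
    push_cast; ring
  have hbound (s : ℝ) (hs : 0 ≤ s) : ⟪f' (a + s • v), v⟫_ℝ ≤ ⟪f' a, v⟫_ℝ + L * ‖v‖ ^ 2 * s :=
    calc ⟪f' (a + s • v), v⟫_ℝ = ⟪f' a, v⟫_ℝ + ⟪f' (a + s • v) - f' a, v⟫_ℝ := by
          rw [inner_sub_left]; ring
      _ ≤ ⟪f' a, v⟫_ℝ + ‖f' (a + s • v) - f' a‖ * ‖v‖ := by gcongr; exact real_inner_le_norm _ _
      _ ≤ ⟪f' a, v⟫_ℝ + L * ‖s • v‖ * ‖v‖ := by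
          gcongr; simpa using hlip (a + s • v) a
      _ = ⟪f' a, v⟫_ℝ + L * ‖v‖ ^ 2 * s := by
          rw [norm_smul, Real.norm_of_nonneg hs]; ring
  have := image_le_of_deriv_right_le_deriv_boundary
    (fun s _ => (hφ s).continuousAt.continuousWithinAt) (fun s _ => (hφ s).hasDerivWithinAt)
    (by simp) (fun s _ => (hB s).continuousAt.continuousWithinAt)
    (fun s _ => (hB s).hasDerivWithinAt) (fun s hs => hbound s hs.1) (right_mem_Icc.2 zero_le_one)
  simpa [v] using this

theorem ConvexOn.add_inner_add_sq_norm_sub_le_of_lipschitz_gradient (hconv : ConvexOn ℝ univ f)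
    {f' : H → H} {L : ℝ} (hL : 0 < L) (hf : ∀ x, HasGradientAt f (f' x) x)
    (hlip : ∀ x y, ‖f' x - f' y‖ ≤ L * ‖x - y‖) (x y : H) :
    f y + ⟪f' y, x - y⟫_ℝ + (2 * L)⁻¹ * ‖f' x - f' y‖ ^ 2 ≤ f x := by
  set G := f' x - f' y
  set b := x - L⁻¹ • G
  have hdescent := le_add_inner_add_half_mul_sq_of_lipschitz_gradient hf hlip x b
  have hconvex := hconv.add_inner_le_of_hasGradientAt_s9 (hf y) b
  have hstep : f x + ⟪f' x, b - x⟫_ℝ + L / 2 * ‖b - x‖ ^ 2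
      = f x - L⁻¹ * ⟪f' x, G⟫_ℝ + L⁻¹ * ‖G‖ ^ 2 - (2 * L)⁻¹ * ‖G‖ ^ 2 := by
    have hbx : b - x = -(L⁻¹ • G) := by simp [b]
    rw [hbx, inner_neg_right, real_inner_smul_right, norm_neg, norm_smul, Real.norm_of_nonneg
      (inv_nonneg.2 hL.le)]
    field_simp
    ring
  have hinner_y : ⟪f' y, b - y⟫_ℝ = ⟪f' y, x - y⟫_ℝ - L⁻¹ * ⟪f' y, G⟫_ℝ := by
    rw [show b - y = (x - y) - L⁻¹ • G by simp only [b]; abel, inner_sub_right,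
      real_inner_smul_right]
  have hG : L⁻¹ * ‖G‖ ^ 2 = L⁻¹ * ⟪f' x, G⟫_ℝ - L⁻¹ * ⟪f' y, G⟫_ℝ := by
    rw [← real_inner_self_eq_norm_sq, inner_sub_left, mul_sub]
  linarith

end

theorem zero_gap_implies_equal_gradients {H : Type*} [NormedAddCommGroup H]
    [InnerProductSpace ℝ H] [CompleteSpace H]
    (f : H → ℝ) (f' : H → H) (L : ℝ) (hL : 0 < L)
    (hconv : ConvexOn ℝ Set.univ f)
    (hgrad : ∀ x, HasGradientAt f (f' x) x)
    (hlip : ∀ x y, ‖f' x - f' y‖ ≤ L * ‖x - y‖)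
    (x y : H)
    (hzero : (inner ℝ (f' y) (y - x) : ℝ) - (f y - f x) = 0) :
    f' y = f' x := by
  have hgap := hconv.add_inner_add_sq_norm_sub_le_of_lipschitz_gradient hL hgrad hlip x y
  have hswap : ⟪f' y, x - y⟫_ℝ = -⟪f' y, y - x⟫_ℝ := by rw [← inner_neg_right, neg_sub]
  have hsq : ‖f' x - f' y‖ ^ 2 ≤ 0 :=
    nonpos_of_mul_nonpos_right (a := (2 * L)⁻¹) (by linarith) (by positivity)
  have hdiff : f' x - f' y = 0 := by simpa using hsq
  exact (sub_eq_zero.1 hdiff).symm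
end

section
/- Let (u_k) be a real sequence and (ζ_k) a positive sequence with Σ_{k=0}^∞ 1/ζ_k = ∞. If lim_{k→∞} [u_{k+1} + ζ_k(u_{k+1} - u_k)] = b for some real b, then lim_{k→∞} u_k = b. -/
/-!
With `θ k = 1 / (1 + ζ k)` the hypothesis says that `u (k + 1)` is the convex combination
`(1 - θ k) u k + θ k v k` of `u k` and the sequence `v k → b`. Since `θ = a / (1 + a)` for the
non-summable `a = 1 / ζ`, the weights `θ` are not summable either. Once `v` is `ε`-close to `b`,
the excess of `|u n - b|` over `ε` is multiplied at each step by `1 - θ k ≤ exp (-θ k)`, so it is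
eventually at most `exp (-∑ θ)` times a constant, which tends to `0`.
-/

open Filter Topology Finset

theorem not_summable_div_one_add {a : ℕ → ℝ} (ha : ∀ k, 0 ≤ a k) (h : ¬Summable a) :
    ¬Summable fun k => a k / (1 + a k) := by
  intro hs
  refine h ((hs.mul_left 2).of_norm_bounded_eventually_nat ?_)
  -- `a k / (1 + a k) < 1 / 2` forces `a k < 1`, where `a k ≤ 2 * (a k / (1 + a k))`.
  filter_upwards [hs.tendsto_atTop_zero.eventually (gt_mem_nhds one_half_pos)] with k hk
  have hpos : 0 < 1 + a k := by linarith [ha k]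
  rw [div_lt_iff₀ hpos] at hk
  rw [Real.norm_of_nonneg (ha k), mul_div_assoc', le_div_iff₀ hpos]
  nlinarith [ha k]

theorem tendsto_prod_Ico_one_sub_of_not_summable {θ : ℕ → ℝ} (hθ₀ : ∀ k, 0 ≤ θ k)
    (hθ₁ : ∀ k, θ k ≤ 1) (hθ : ¬Summable θ) (N : ℕ) :
    Tendsto (fun n => ∏ k ∈ Ico N n, (1 - θ k)) atTop (𝓝 0) := by
  have hsum : Tendsto (fun n => ∑ k ∈ Ico N n, θ k) atTop atTop := by
    refine (tendsto_atTop_add_const_right _ (-∑ k ∈ range N, θ k)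
      ((not_summable_iff_tendsto_nat_atTop_of_nonneg hθ₀).1 hθ)).congr' ?_
    filter_upwards [eventually_ge_atTop N] with n hn
    rw [sum_Ico_eq_sub _ hn, sub_eq_add_neg]
  have hexp : Tendsto (fun n => Real.exp (-∑ k ∈ Ico N n, θ k)) atTop (𝓝 0) :=
    Real.tendsto_exp_atBot.comp (tendsto_neg_atTop_atBot.comp hsum)
  refine squeeze_zero (fun n => prod_nonneg fun k _ => sub_nonneg.2 (hθ₁ k)) (fun n => ?_) hexp
  rw [← sum_neg_distrib, Real.exp_sum]
  refine prod_le_prod (fun k _ => sub_nonneg.2 (hθ₁ k)) fun k _ => ?_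
  linarith [Real.add_one_le_exp (-θ k)]

theorem sub_le_prod_Ico_mul_of_le_step {y θ : ℕ → ℝ} {c : ℝ} {N : ℕ} (hθ₁ : ∀ k, θ k ≤ 1)
    (hy : ∀ k ≥ N, y (k + 1) ≤ (1 - θ k) * y k + θ k * c) :
    ∀ n ≥ N, y n - c ≤ (∏ k ∈ Ico N n, (1 - θ k)) * (y N - c) := by
  intro n hn
  induction n, hn using Nat.le_induction with
  | base => simp
  | succ n hn ih =>
    calc y (n + 1) - c ≤ (1 - θ n) * (y n - c) := by linarith [hy n hn]
      _ ≤ (1 - θ n) * ((∏ k ∈ Ico N n, (1 - θ k)) * (y N - c)) :=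
        mul_le_mul_of_nonneg_left ih (sub_nonneg.2 (hθ₁ n))
      _ = (∏ k ∈ Ico N (n + 1), (1 - θ k)) * (y N - c) := by
        rw [prod_Ico_succ_top hn]; ring

theorem tendsto_of_eq_lineMap_of_not_summable {E : Type*} [NormedAddCommGroup E]
    [NormedSpace ℝ E] {x e : ℕ → E} {θ : ℕ → ℝ} {b : E} (hθ₀ : ∀ k, 0 ≤ θ k)
    (hθ₁ : ∀ k, θ k ≤ 1) (hθ : ¬Summable θ)
    (hx : ∀ k, x (k + 1) = AffineMap.lineMap (x k) (e k) (θ k)) (he : Tendsto e atTop (𝓝 b)) :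
    Tendsto x atTop (𝓝 b) := by
  rw [Metric.tendsto_nhds]
  intro ε hε
  obtain ⟨N, hN⟩ := eventually_atTop.1 (Metric.tendsto_nhds.1 he (ε / 2) (half_pos hε))
  have hstep : ∀ k ≥ N, dist (x (k + 1)) b ≤ (1 - θ k) * dist (x k) b + θ k * (ε / 2) := by
    intro k hk
    have hsplit : x (k + 1) - b = (1 - θ k) • (x k - b) + θ k • (e k - b) := by
      rw [hx k, AffineMap.lineMap_apply_module]; module
    rw [dist_eq_norm, hsplit, dist_eq_norm]
    refine (norm_add_le _ _).trans ?_
    rw [norm_smul, norm_smul, Real.norm_of_nonneg (sub_nonneg.2 (hθ₁ k)),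
      Real.norm_of_nonneg (hθ₀ k), ← dist_eq_norm, ← dist_eq_norm]
    gcongr
    · exact hθ₀ k
    · exact (hN k hk).le
  have hprod := (tendsto_prod_Ico_one_sub_of_not_summable hθ₀ hθ₁ hθ N).mul_const (dist (x N) b)
  rw [zero_mul] at hprod
  filter_upwards [eventually_ge_atTop N, hprod.eventually (gt_mem_nhds (half_pos hε))]
    with n hn hsmall
  have hbound := sub_le_prod_Ico_mul_of_le_step (y := fun n => dist (x n) b) hθ₁ hstep n hn
  have hP : 0 ≤ ∏ k ∈ Ico N n, (1 - θ k) := prod_nonneg fun k _ => sub_nonneg.2 (hθ₁ k)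
  calc dist (x n) b ≤ ε / 2 + (∏ k ∈ Ico N n, (1 - θ k)) * (dist (x N) b - ε / 2) := by
        linarith [hbound]
    _ ≤ ε / 2 + (∏ k ∈ Ico N n, (1 - θ k)) * dist (x N) b := by gcongr; linarith
    _ < ε := by linarith

theorem sequence_limit_lemma (u ζ : ℕ → ℝ) (b : ℝ)
    (hζ : ∀ k, 0 < ζ k)
    (hdiv : Tendsto (fun n => ∑ k ∈ Finset.range n, 1 / ζ k) atTop atTop)
    (hlim : Tendsto (fun k => u (k + 1) + ζ k * (u (k + 1) - u k)) atTop (nhds b)) :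
    Tendsto u atTop (nhds b) := by
  have hinv : ∀ k, 0 ≤ 1 / ζ k := fun k => (one_div_pos.2 (hζ k)).le
  have hθ : ¬Summable fun k => 1 / (1 + ζ k) := by
    convert not_summable_div_one_add hinv
      ((not_summable_iff_tendsto_nat_atTop_of_nonneg hinv).2 hdiv) using 2
    funext k
    field_simp [(hζ k).ne']
    ring
  refine tendsto_of_eq_lineMap_of_not_summable (fun k => ?_) (fun k => ?_) hθ (fun k => ?_) hlim
  all_goals have hζ₁ : 0 < 1 + ζ k := by linarith [hζ k]
  · positivity
  · rw [div_le_one hζ₁]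
    linarith [hζ k]
  · rw [AffineMap.lineMap_apply_module, smul_eq_mul, smul_eq_mul]
    field_simp
    ring
end
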